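/- arXiv:0811.3998 — 2 statements merged into one kernel-verified Lean document; each statement's English description precedes it below -/
import Mathlib

section
/- Let 𝒜 ⊆ [0,1] be a set of real numbers satisfying the descending chain condition (every nonincreasing sequence in 𝒜 is eventually constant) with all elements positive, and let c > 0 be a real number. Then there are only finitely many finite multisets {a₁,…,aₖ} of elements of 𝒜 with a₁ + ⋯ + aₖ = c. -/
/-!
A DCC set of reals is well-founded, hence partially well-ordered, so by Higman's lemma finite
lists from it are partially well-ordered by "bounded entrywise by a sublist of". Two lists of
positive elements related in this way with equal sums coincide, so the lists with a fixed sum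
form an antichain, which must be finite.
-/

/-- A set of reals satisfies the descending chain condition if every
nonincreasing sequence of its elements is eventually constant. -/
def DCC (A : Set ℝ) : Prop :=
  ∀ f : ℕ → ℝ, (∀ n, f n ∈ A) → Antitone f → ∃ N, ∀ n, N ≤ n → f n = f N

theorem DCC.isWF {A : Set ℝ} (hA : DCC A) : A.IsWF := by
  rw [Set.isWF_iff_no_descending_seq]
  intro f hf hmem
  obtain ⟨N, hN⟩ := hA f hmem hf.antitone
  exact (hf N.lt_succ_self).ne (hN (N + 1) N.le_succ)

namespace List

variable {M : Type*} [AddCommMonoid M] [PartialOrder M] [IsOrderedCancelAddMonoid M]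
  {l₁ l₂ : List M}

theorem Forall₂.eq_of_sum_eq (h : Forall₂ (· ≤ ·) l₁ l₂) (hs : l₁.sum = l₂.sum) : l₁ = l₂ := by
  induction h with
  | nil => rfl
  | @cons a b _ _ hab htail ih =>
    rw [sum_cons, sum_cons] at hs
    obtain rfl : a = b :=
      hab.eq_of_not_lt fun hlt => (add_lt_add_of_lt_of_le hlt htail.sum_le_sum).ne hs
    rw [ih (add_left_cancel hs)]

theorem Sublist.eq_of_sum_eq (h : l₁ <+ l₂) (hpos : ∀ a ∈ l₂, 0 < a) (hs : l₁.sum = l₂.sum) :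
    l₁ = l₂ := by
  induction h with
  | slnil => rfl
  | @cons l₁ l₂ a hsub _ =>
    have hle : l₁.sum ≤ l₂.sum :=
      hsub.sum_le_sum fun b hb => (hpos b (mem_cons_of_mem a hb)).le
    rw [sum_cons] at hs
    exact absurd (hs ▸ hle) (lt_add_of_pos_left _ (hpos a mem_cons_self)).not_ge
  | cons_cons a _ ih =>
    rw [sum_cons, sum_cons] at hs
    rw [ih (fun b hb => hpos b (mem_cons_of_mem a hb)) (add_left_cancel hs)]

theorem SublistForall₂.eq_of_sum_eq (h : SublistForall₂ (· ≤ ·) l₁ l₂) (hpos : ∀ a ∈ l₂, 0 < a)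
    (hs : l₁.sum = l₂.sum) : l₁ = l₂ := by
  obtain ⟨l, hle, hsub⟩ := sublistForall₂_iff.1 h
  have hsum : l.sum = l₂.sum :=
    le_antisymm (hsub.sum_le_sum fun a ha => (hpos a ha).le) (hs ▸ hle.sum_le_sum)
  rw [hle.eq_of_sum_eq (hs.trans hsum.symm), hsub.eq_of_sum_eq hpos hsum]

end List

theorem Set.IsPWO.finite_setOf_multiset_sum_eq {M : Type*} [AddCommMonoid M] [PartialOrder M]
    [IsOrderedCancelAddMonoid M] {A : Set M} (hA : A.IsPWO) (hpos : ∀ a ∈ A, 0 < a) (c : M) :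
    {s : Multiset M | (∀ a ∈ s, a ∈ A) ∧ s.sum = c}.Finite := by
  set L := {l : List M | (∀ x ∈ l, x ∈ A) ∧ l.sum = c}
  have hPWO : L.PartiallyWellOrderedOn (List.SublistForall₂ (· ≤ ·)) :=
    (hA.partiallyWellOrderedOn_sublistForall₂ (· ≤ ·)).mono fun _ hl => hl.1
  have hanti : IsAntichain (List.SublistForall₂ (· ≤ ·)) L :=
    fun _ h₁ _ h₂ hne hrel =>
      hne (hrel.eq_of_sum_eq (fun a ha => hpos a (h₂.1 a ha)) (h₁.2.trans h₂.2.symm))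
  refine ((hanti.finite_of_partiallyWellOrderedOn hPWO).image (↑)).subset ?_
  rintro s ⟨hsA, hsum⟩
  exact ⟨s.toList, ⟨fun x hx => hsA x (Multiset.mem_toList.1 hx), by rwa [Multiset.sum_toList]⟩,
    Multiset.coe_toList s⟩

theorem finitely_many_multisets_with_fixed_sum_general
    (A : Set ℝ) (hDCC : DCC A)
    (hpos : ∀ a ∈ A, 0 < a) (c : ℝ) :
    {s : Multiset ℝ | (∀ a ∈ s, a ∈ A) ∧ s.sum = c}.Finite :=
  hDCC.isWF.isPWO.finite_setOf_multiset_sum_eq hpos c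

/-- There are only finitely many finite multisets of elements of a DCC set
`A ⊆ [0,1]` of positive reals whose sum is a fixed positive constant `c`. -/
theorem finitely_many_multisets_with_fixed_sum
    (A : Set ℝ) (hA : A ⊆ Set.Icc 0 1) (hDCC : DCC A)
    (hpos : ∀ a ∈ A, 0 < a) (c : ℝ) (hc : 0 < c) :
    {s : Multiset ℝ | (∀ a ∈ s, a ∈ A) ∧ s.sum = c}.Finite :=
  finitely_many_multisets_with_fixed_sum_general A hDCC hpos c
end

section
/- Let S = ℙ(𝓔) → C be a ruled surface over a smooth projective curve C of genus g, with 𝓔 normalized (H⁰(𝓔) ≠ 0 but H⁰(𝓔 ⊗ L) = 0 for all line bundles L of degree −1), and let e = −deg(𝓔), C₀ the section with C₀² = −e, F a fiber. If B = Σ bⱼBⱼ is an effective ℚ-divisor with all bⱼ < 1 and K_S + B ≡ 0 (numerically trivial), then from (K_S + B)·C₀ = 0 one deduces 2g − 2 + (1 − t)e ≤ 0, where t < 1 is the coefficient of C₀ in B; in particular if e ≥ 0 then g ≤ 1, and if e = 0 then g = 1. -/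
/-- Intersection-number computation on a ruled surface `S = ℙ(𝓔) → C` of
genus `g` and invariant `e = -deg 𝓔`, with normalized section `C₀`
(`C₀² = -e`, `K_S ≡ -2C₀ + (2g-2-e)F`, so `K_S·C₀ = e + 2g - 2`).  If
`B = t C₀ + ∑ bⱼ Bⱼ` is effective with all coefficients `< 1`, the numbers
`iC j = Bⱼ·C₀ ≥ 0`, and `K_S + B` is numerically trivial, then
`(K_S + B)·C₀ = 0` reads `(e + 2g - 2) + t(-e) + ∑ bⱼ (Bⱼ·C₀) = 0`, and one
deduces `2g - 2 + (1 - t)e ≤ 0`; in particular `e ≥ 0` forces `g ≤ 1`, and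
`e = 0` (with `g ≥ 1`) forces `g = 1`. -/
theorem ruled_surface_genus_bound
    (g e : ℤ) (t : ℝ) (ht0 : 0 ≤ t) (ht1 : t < 1) (k : ℕ)
    (b iC : Fin k → ℝ) (hb : ∀ j, 0 < b j ∧ b j < 1) (hiC : ∀ j, 0 ≤ iC j)
    (heq : ((e : ℝ) + 2 * g - 2) + t * (-(e : ℝ)) + (∑ j, b j * iC j) = 0) :
    2 * (g : ℝ) - 2 + (1 - t) * e ≤ 0 ∧
      (0 ≤ e → g ≤ 1) ∧ (e = 0 → 1 ≤ g → g = 1) := by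
  have hsum : 0 ≤ ∑ j, b j * iC j :=
    Finset.sum_nonneg fun j _ => mul_nonneg (hb j).1.le (hiC j)
  have h1 : 2 * (g : ℝ) - 2 + (1 - t) * e ≤ 0 := by nlinarith
  refine ⟨h1, ?_, ?_⟩
  · intro he
    have he' : (0 : ℝ) ≤ e := by exact_mod_cast he
    have : 2 * (g : ℝ) - 2 ≤ 0 := by nlinarith
    have : (g : ℝ) ≤ 1 := by linarith
    exact_mod_cast this
  · intro he hg
    subst he
    have : 2 * (g : ℝ) - 2 ≤ 0 := by simpa using h1
    have : (g : ℝ) ≤ 1 := by linarith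
    have : g ≤ 1 := by exact_mod_cast this
    omega
end
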